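/- Let (u_n)_{n≥1} be a sequence of positive integers tending to infinity with n such that u_n ≡ n (mod 2) for every n ≥ 1, and let k be a positive integer. Then ∑_{n=1}^∞ F_{u_{n+2k} − u_n} / (F_{u_n} · F_{u_{n+2k}}) = ∑_{n=1}^{k} F_{u_{2n} − u_{2n-1}} / (F_{u_{2n}} · F_{u_{2n-1}}). -/

import Mathlib

/-!
By d'Ocagne's identity, `F_{a-b} / (F_a F_b) = (-1)^b (F_{b+1}/F_b - F_{a+1}/F_a)`. Subtracting the
limit `φ` of the Fibonacci ratios and absorbing the sign into `e_j = (-1)^j (F_{j+1}/F_j - φ)`,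
which tends to `0`, the parity condition turns the `n`-th summand into `e_{u_n} - e_{u_{n+2k}}`.
The partial sums therefore telescope to `∑_{n ≤ 2k} e_{u_n}` minus a block of `2k` terms that
vanishes as `u_n → ∞`; grouping `∑_{n ≤ 2k} e_{u_n}` in consecutive pairs, where the signs are now
opposite, gives the right-hand side.
-/

open Filter Finset Topology

/-- The Fibonacci sequence extended to all integer indices via
`F_{-n} = (-1)^(n+1) F_n`. -/
def fibZ (n : ℤ) : ℤ :=
  if 0 ≤ n then (Nat.fib n.toNat : ℤ) else (-1) ^ (n.natAbs + 1) * (Nat.fib n.natAbs : ℤ)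

theorem fibZ_eq_intFib : fibZ = Int.fib := by
  funext n
  obtain ⟨m, rfl | rfl⟩ := n.eq_nat_or_neg
  · simp [fibZ]
  · rcases m.eq_zero_or_pos with rfl | _ <;> simp [fibZ, Int.fib_neg_natCast]

theorem Int.fib_natCast_sub_natCast (a b : ℕ) :
    Int.fib (a - b) = (-1) ^ b * (Nat.fib a * Nat.fib (b + 1) - Nat.fib (a + 1) * Nat.fib b) := by
  have h := Int.fib_add (-b) a
  rw [show -(b : ℤ) - 1 = -((b + 1 : ℕ) : ℤ) by push_cast; ring, Int.fib_neg_natCast,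
    Int.fib_neg_natCast, ← Nat.cast_add_one, Int.fib_natCast, Int.fib_natCast,
    neg_add_eq_sub] at h
  rw [h]
  ring

noncomputable def signedFibRatioError (j : ℕ) : ℝ :=
  (-1) ^ j * (Nat.fib (j + 1) / Nat.fib j - Real.goldenRatio)

theorem fibZ_sub_div_fib_mul_fib {a b : ℕ} (ha : 0 < a) (hb : 0 < b) :
    (fibZ (a - b) : ℝ) / (Nat.fib b * Nat.fib a)
      = signedFibRatioError b - (-1) ^ (a + b) * signedFibRatioError a := by
  have hfa : (Nat.fib a : ℝ) ≠ 0 := by simpa using ha.ne'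
  have hfb : (Nat.fib b : ℝ) ≠ 0 := by simpa using hb.ne'
  have hsign : (-1 : ℝ) ^ (a + b) * (-1) ^ a = (-1) ^ b := by
    rw [pow_add, mul_right_comm, ← mul_pow]; simp
  rw [fibZ_eq_intFib, Int.fib_natCast_sub_natCast, signedFibRatioError, signedFibRatioError,
    ← mul_assoc, hsign]
  push_cast
  field_simp
  ring

theorem tendsto_signedFibRatioError_atTop : Tendsto signedFibRatioError atTop (𝓝 0) := by
  rw [tendsto_zero_iff_norm_tendsto_zero]
  have h := (tendsto_sub_nhds_zero_iff.2 tendsto_fib_succ_div_fib_atTop).norm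
  rw [norm_zero] at h
  refine h.congr fun j => ?_
  simp [signedFibRatioError]

theorem tendsto_sum_range_sub_shift {M : Type*} [AddCommGroup M] [TopologicalSpace M]
    [IsTopologicalAddGroup M] {f : ℕ → M} (hf : Tendsto f atTop (𝓝 0)) (d : ℕ) :
    Tendsto (fun N => ∑ n ∈ range N, (f n - f (n + d))) atTop (𝓝 (∑ n ∈ range d, f n)) := by
  have htel (N : ℕ) : ∑ n ∈ range N, (f n - f (n + d))
      = ∑ n ∈ range d, f n - ∑ n ∈ range d, f (N + n) := by
    rw [sum_sub_distrib, sub_eq_sub_iff_add_eq_add, ← sum_range_add, add_comm N d, sum_range_add]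
    simp only [add_comm d]
  simp only [htel]
  simpa using tendsto_const_nhds.sub
    (tendsto_finsetSum (range d) fun n _ => hf.comp (tendsto_add_atTop_nat n))

theorem sum_range_two_mul {M : Type*} [AddCommMonoid M] (f : ℕ → M) (k : ℕ) :
    ∑ n ∈ range (2 * k), f n = ∑ i ∈ range k, (f (2 * i) + f (2 * i + 1)) := by
  induction k with
  | zero => simp
  | succ k ih => rw [Nat.mul_succ, sum_range_succ, sum_range_succ, sum_range_succ, ih, add_assoc]

theorem statement11_general (u : ℕ → ℕ) (hupos : ∀ n, 1 ≤ n → 1 ≤ u n)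
    (hutend : Tendsto u atTop atTop)
    (hparity : ∀ n, 1 ≤ n → u n ≡ n [MOD 2]) (k : ℕ) :
    Tendsto (fun N => ∑ n ∈ Finset.range N,
        (fibZ ((u (n + 1 + 2 * k) : ℤ) - (u (n + 1) : ℤ)) : ℝ) /
          ((Nat.fib (u (n + 1)) : ℝ) * (Nat.fib (u (n + 1 + 2 * k)) : ℝ)))
      atTop
      (𝓝 (∑ n ∈ Finset.range k,
        (fibZ ((u (2 * n + 2) : ℤ) - (u (2 * n + 1) : ℤ)) : ℝ) /
          ((Nat.fib (u (2 * n + 2)) : ℝ) * (Nat.fib (u (2 * n + 1)) : ℝ)))) := by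
  have hterm {m n : ℕ} (hm : 1 ≤ m) (hn : 1 ≤ n) :
      (fibZ (u m - u n) : ℝ) / (Nat.fib (u n) * Nat.fib (u m))
        = signedFibRatioError (u n) - (-1) ^ (m + n) * signedFibRatioError (u m) := by
    have hmod : (u m + u n) % 2 = (m + n) % 2 := (hparity m hm).add (hparity n hn)
    rw [fibZ_sub_div_fib_mul_fib (hupos m hm) (hupos n hn), neg_one_pow_eq_pow_mod_two,
      hmod, ← neg_one_pow_eq_pow_mod_two]
  set f : ℕ → ℝ := fun n => signedFibRatioError (u (n + 1))
  have hf : Tendsto f atTop (𝓝 0) :=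
    tendsto_signedFibRatioError_atTop.comp (hutend.comp (tendsto_add_atTop_nat 1))
  have hleft (n : ℕ) : (fibZ ((u (n + 1 + 2 * k) : ℤ) - (u (n + 1) : ℤ)) : ℝ) /
      ((Nat.fib (u (n + 1)) : ℝ) * (Nat.fib (u (n + 1 + 2 * k)) : ℝ)) = f n - f (n + 2 * k) := by
    rw [hterm (by omega) (by omega), Even.neg_one_pow ⟨n + 1 + k, by ring⟩, one_mul,
      add_right_comm n]
  have hright (i : ℕ) : (fibZ ((u (2 * i + 2) : ℤ) - (u (2 * i + 1) : ℤ)) : ℝ) /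
      ((Nat.fib (u (2 * i + 2)) : ℝ) * (Nat.fib (u (2 * i + 1)) : ℝ))
        = f (2 * i) + f (2 * i + 1) := by
    rw [mul_comm (Nat.fib (u (2 * i + 2)) : ℝ), hterm (by omega) (by omega),
      Odd.neg_one_pow ⟨2 * i + 1, by ring⟩]
    ring
  simp only [hleft, hright, ← sum_range_two_mul]
  exact tendsto_sum_range_sub_shift hf (2 * k)

/-- Let `(u_n)_{n≥1}` be a sequence of positive integers tending to
infinity with `u_n ≡ n (mod 2)` for all `n ≥ 1`, and let `k ≥ 1`. Then
`∑_{n=1}^∞ F_{u_{n+2k} - u_n} / (F_{u_n} F_{u_{n+2k}})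
= ∑_{n=1}^k F_{u_{2n} - u_{2n-1}} / (F_{u_{2n}} F_{u_{2n-1}})`. -/
theorem statement11 (u : ℕ → ℕ) (hupos : ∀ n, 1 ≤ n → 1 ≤ u n)
    (hutend : Tendsto u atTop atTop)
    (hparity : ∀ n, 1 ≤ n → u n ≡ n [MOD 2]) (k : ℕ) (hk : 1 ≤ k) :
    Tendsto (fun N => ∑ n ∈ Finset.range N,
        (fibZ ((u (n + 1 + 2 * k) : ℤ) - (u (n + 1) : ℤ)) : ℝ) /
          ((Nat.fib (u (n + 1)) : ℝ) * (Nat.fib (u (n + 1 + 2 * k)) : ℝ)))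
      atTop
      (𝓝 (∑ n ∈ Finset.range k,
        (fibZ ((u (2 * n + 2) : ℤ) - (u (2 * n + 1) : ℤ)) : ℝ) /
          ((Nat.fib (u (2 * n + 2)) : ℝ) * (Nat.fib (u (2 * n + 1)) : ℝ)))) :=
  statement11_general u hupos hutend hparity k
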